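/- Let m, n be positive integers and let A ∈ ℝ^{(mn)×(mn)} be symmetric positive definite, with rows and columns indexed by pairs (i,j) with 1 ≤ i ≤ m, 1 ≤ j ≤ n. Let G ∈ ℝ^{m×n} and p > 0. Define D ∈ ℝ^{m×n} by D_{i,j} = A_{(i,j),(i,j)} (the diagonal of A), and define the diagonal (Adam-style) update U = D^{⊙(-p)} ⊙ G. Then λ_max(A)^{-p} · ‖G‖_F ≤ ‖U‖_F ≤ λ_min(A)^{-p} · ‖G‖_F, where λ_min(A) and λ_max(A) are the smallest and largest eigenvalues of A. -/

import Mathlib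

/-!
Writing `A = V diag(λ) Vᵀ` with `V` orthogonal, each diagonal entry `A_kk = ∑ᵢ V_ki² λᵢ` is a
convex combination of the eigenvalues, so it lies in `[λ_min, λ_max]`. As `t ↦ t^(-p)` is antitone
on `(0, ∞)`, every entry of `D^{⊙(-p)}` lies in `[λ_max^(-p), λ_min^(-p)]`, and a Hadamard
factor with entries in such a range scales the Frobenius norm by a factor in the same range.
-/

open Matrix Finset

/-- Frobenius norm of a real matrix: square root of the sum of squares of all entries. -/
noncomputable def frobeniusNorm' {m n : Type*} [Fintype m] [Fintype n]
    (M : Matrix m n ℝ) : ℝ :=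
  Real.sqrt (∑ i, ∑ j, (M i j) ^ 2)

namespace Matrix.IsHermitian

variable {ι : Type*} [Fintype ι] [DecidableEq ι] {A : Matrix ι ι ℝ} (hA : A.IsHermitian)

lemma sum_sq_eigenvectorUnitary_apply (k : ι) :
    ∑ i, (hA.eigenvectorUnitary : Matrix ι ι ℝ) k i ^ 2 = 1 := by
  have h := congrFun (congrFun (mem_unitaryGroup_iff.mp hA.eigenvectorUnitary.2) k) k
  simpa [mul_apply, star_apply, sq] using h

lemma apply_self_eq_sum_sq_eigenvectorUnitary_mul_eigenvalues (k : ι) :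
    A k k = ∑ i, (hA.eigenvectorUnitary : Matrix ι ι ℝ) k i ^ 2 * hA.eigenvalues i := by
  conv_lhs => rw [hA.spectral_theorem]
  simp only [Unitary.conjStarAlgAut_apply, mul_apply, diagonal_apply, star_apply,
    Function.comp_apply, RCLike.ofReal_real_eq_id, id_eq, star_trivial, mul_ite, mul_zero,
    sum_ite_eq', mem_univ, if_true]
  exact sum_congr rfl fun i _ => by ring

variable [Nonempty ι]

lemma inf'_eigenvalues_le_apply_self (k : ι) :
    univ.inf' univ_nonempty hA.eigenvalues ≤ A k k := by
  have h := inf_le_centerMass (s := univ) (f := hA.eigenvalues)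
    (fun i _ => sq_nonneg ((hA.eigenvectorUnitary : Matrix ι ι ℝ) k i))
    (by rw [hA.sum_sq_eigenvectorUnitary_apply]; exact one_pos)
  rw [hA.apply_self_eq_sum_sq_eigenvectorUnitary_mul_eigenvalues]
  simpa only [centerMass_eq_of_sum_1 _ _ (hA.sum_sq_eigenvectorUnitary_apply k), smul_eq_mul]
    using h

lemma apply_self_le_sup'_eigenvalues (k : ι) :
    A k k ≤ univ.sup' univ_nonempty hA.eigenvalues := by
  have h := centerMass_le_sup (s := univ) (f := hA.eigenvalues)
    (fun i _ => sq_nonneg ((hA.eigenvectorUnitary : Matrix ι ι ℝ) k i))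
    (by rw [hA.sum_sq_eigenvectorUnitary_apply]; exact one_pos)
  rw [hA.apply_self_eq_sum_sq_eigenvectorUnitary_mul_eigenvalues]
  simpa only [centerMass_eq_of_sum_1 _ _ (hA.sum_sq_eigenvectorUnitary_apply k), smul_eq_mul]
    using h

end Matrix.IsHermitian

section frobeniusNorm'

variable {m n : Type*} [Fintype m] [Fintype n]

lemma frobeniusNorm'_le_of_abs_le {M N : Matrix m n ℝ} (h : ∀ i j, |M i j| ≤ |N i j|) :
    frobeniusNorm' M ≤ frobeniusNorm' N :=
  Real.sqrt_le_sqrt <| sum_le_sum fun i _ => sum_le_sum fun j _ => sq_le_sq.mpr (h i j)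

lemma frobeniusNorm'_smul (c : ℝ) (M : Matrix m n ℝ) :
    frobeniusNorm' (c • M) = |c| * frobeniusNorm' M := by
  simp only [frobeniusNorm', Matrix.smul_apply, smul_eq_mul, mul_pow, ← mul_sum]
  rw [Real.sqrt_mul (sq_nonneg c), Real.sqrt_sq_eq_abs]

variable {W : Matrix m n ℝ} (M : Matrix m n ℝ)

lemma mul_frobeniusNorm'_le_frobeniusNorm'_hadamard {a : ℝ} (ha : 0 ≤ a)
    (hW : ∀ i j, a ≤ |W i j|) : a * frobeniusNorm' M ≤ frobeniusNorm' (W ⊙ M) := by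
  rw [← abs_of_nonneg ha, ← frobeniusNorm'_smul]
  refine frobeniusNorm'_le_of_abs_le fun i j => ?_
  simp only [Matrix.smul_apply, hadamard_apply, smul_eq_mul, abs_mul, abs_of_nonneg ha]
  exact mul_le_mul_of_nonneg_right (hW i j) (abs_nonneg _)

lemma frobeniusNorm'_hadamard_le_mul_frobeniusNorm' {b : ℝ} (hb : 0 ≤ b)
    (hW : ∀ i j, |W i j| ≤ b) : frobeniusNorm' (W ⊙ M) ≤ b * frobeniusNorm' M := by
  rw [← abs_of_nonneg hb, ← frobeniusNorm'_smul]
  refine frobeniusNorm'_le_of_abs_le fun i j => ?_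
  simp only [Matrix.smul_apply, hadamard_apply, smul_eq_mul, abs_mul, abs_of_nonneg hb]
  exact mul_le_mul_of_nonneg_right (hW i j) (abs_nonneg _)

end frobeniusNorm'

/-- Let `A ∈ ℝ^{(mn)×(mn)}` be symmetric positive definite (indexed by pairs
`(i,j)`), `G ∈ ℝ^{m×n}`, `p > 0`.  With the diagonal scaling `D_{i,j} = A_{(i,j),(i,j)}` and
the diagonal (Adam-style) update `U = D^{⊙(-p)} ⊙ G`, one has
`λ_max(A)^{-p} ‖G‖_F ≤ ‖U‖_F ≤ λ_min(A)^{-p} ‖G‖_F`. -/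
theorem stmt_5 (m n : ℕ) [NeZero m] [NeZero n]
    (A : Matrix (Fin m × Fin n) (Fin m × Fin n) ℝ) (hA : A.IsHermitian) (hApd : A.PosDef)
    (G : Matrix (Fin m) (Fin n) ℝ) (p : ℝ) (hp : 0 < p)
    (D : Matrix (Fin m) (Fin n) ℝ) (hD : ∀ i j, D i j = A (i, j) (i, j))
    (U : Matrix (Fin m) (Fin n) ℝ)
    (hU : U = Matrix.of fun i j => (D i j) ^ (-p) * G i j) :
    (Finset.univ.sup' Finset.univ_nonempty hA.eigenvalues) ^ (-p) * frobeniusNorm' G ≤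
        frobeniusNorm' U ∧
      frobeniusNorm' U ≤
        (Finset.univ.inf' Finset.univ_nonempty hA.eigenvalues) ^ (-p) * frobeniusNorm' G := by
  set lmin := univ.inf' univ_nonempty hA.eigenvalues
  set lmax := univ.sup' univ_nonempty hA.eigenvalues
  have hlmin : 0 < lmin := (lt_inf'_iff _).mpr fun i _ => hApd.eigenvalues_pos i
  have hlmax : 0 < lmax :=
    (lt_sup'_iff _).mpr ⟨Classical.arbitrary _, mem_univ _, hApd.eigenvalues_pos _⟩
  have hD_mem (i j) : D i j ∈ Set.Icc lmin lmax := hD i j ▸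
    ⟨hA.inf'_eigenvalues_le_apply_self (i, j), hA.apply_self_le_sup'_eigenvalues (i, j)⟩
  have hW (i j) : |D i j ^ (-p)| ∈ Set.Icc (lmax ^ (-p)) (lmin ^ (-p)) := by
    have hDij := hlmin.trans_le (hD_mem i j).1
    rw [abs_of_nonneg (Real.rpow_nonneg hDij.le _)]
    exact ⟨Real.rpow_le_rpow_of_nonpos hDij (hD_mem i j).2 (neg_nonpos.mpr hp.le),
      Real.rpow_le_rpow_of_nonpos hlmin (hD_mem i j).1 (neg_nonpos.mpr hp.le)⟩
  have hU_eq : U = (of fun i j => D i j ^ (-p)) ⊙ G := hU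
  rw [hU_eq]
  exact ⟨mul_frobeniusNorm'_le_frobeniusNorm'_hadamard G (by positivity) fun i j => (hW i j).1,
    frobeniusNorm'_hadamard_le_mul_frobeniusNorm' G (by positivity) fun i j => (hW i j).2⟩
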